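/- arXiv:2412.10842 — 4 statements merged into one kernel-verified Lean document; each statement's English description precedes it below -/
import Mathlib

section
/- Let n ≥ 1 and let p : 𝔽₂ⁿ → 𝔽₂ be a polynomial of degree at most 2. Then for every k ≥ 0, the k-th Fourier weight of f(x) = (−1)^{p(x)} satisfies ∑_{A ⊆ [n], |A| = k} |f̂(A)| ≤ (1 + √2)^k. -/
/-- The Fourier coefficient `f̂(A) = 2^{-n} ∑_{x ∈ 𝔽₂ⁿ} f(x) (-1)^{x_A}`,
where `x_A = ∑_{i ∈ A} x_i ∈ 𝔽₂`. -/
noncomputable def fCoeff {n : ℕ} (f : (Fin n → ZMod 2) → ℝ) (A : Finset (Fin n)) : ℝ :=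
  (1 / 2 ^ n) * ∑ x : Fin n → ZMod 2, f x * (-1 : ℝ) ^ (∑ i ∈ A, x i).val

/-- `p : 𝔽₂ⁿ → 𝔽₂` is a polynomial of degree at most 2, i.e.
`p(x) = ∑_{i < j} a_{ij} x_i x_j + ∑ b_i x_i + c`. -/
def IsDegreeLE2 {n : ℕ} (p : (Fin n → ZMod 2) → ZMod 2) : Prop :=
  ∃ (a : Fin n → Fin n → ZMod 2) (b : Fin n → ZMod 2) (c : ZMod 2),
    ∀ x, p x = (∑ i : Fin n, ∑ j : Fin n, if i < j then a i j * x i * x j else 0)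
      + (∑ i : Fin n, b i * x i) + c

/-!
Write `f = (-1)^p`. Since `p` has degree at most 2, `B x y = p (x + y) + p x + p y + p 0` is
biadditive, so the autocorrelation `∑ₓ f x f (x + z)` vanishes off the radical `K` of `B` and on
`K` equals `2ⁿ (-1)^(p z + p 0)`. On `K` the map `z ↦ p z + p 0` is additive, hence `f̂(A)²` is
`|K| / 2ⁿ` or `0`, and the support `S` of `f̂` is an affine subspace of `𝔽₂ⁿ` (sets modulo `∆`).
Parseval gives `|S| |K| / 2ⁿ = 1`.

With `t = √2 - 1`, every affine family `S` satisfies `∑_{A ∈ S} t^|A| ≤ √|S|`: splitting `S`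
according to one coordinate gives two affine halves which are either empty or equinumerous, and
`1 + t = √2`. Hence `t^k` times the `k`-th Fourier weight is at most `√(|K| / 2ⁿ) √|S| = 1`.
-/

open Finset
open scoped symmDiff

noncomputable def signChar : AddChar (ZMod 2) ℝ where
  toFun a := (-1) ^ a.val
  map_zero_eq_one' := by simp
  map_add_eq_mul' a b := by rw [← pow_add, ZMod.val_add, ← neg_one_pow_eq_pow_mod_two]

lemma signChar_apply (a : ZMod 2) : signChar a = (-1) ^ a.val := rfl

@[simp] lemma signChar_one : signChar 1 = -1 := by simp [signChar_apply, ZMod.val_one]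

@[simp] lemma signChar_mul_self (a : ZMod 2) : signChar a * signChar a = 1 := by
  rw [← AddChar.map_add_eq_mul, CharTwo.add_self_eq_zero, AddChar.map_zero_eq_one]

lemma signChar_injective : Function.Injective signChar := by
  intro a b h
  rw [signChar_apply, signChar_apply] at h
  fin_cases a <;> fin_cases b <;> first | rfl | (norm_num [ZMod.val] at h)

lemma signChar_sum {ι : Type*} (s : Finset ι) (g : ι → ZMod 2) :
    signChar (∑ i ∈ s, g i) = ∏ i ∈ s, signChar (g i) := by
  induction s using Finset.cons_induction with
  | empty => simp
  | cons i s hi ih => rw [sum_cons, prod_cons, AddChar.map_add_eq_mul, ih]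

lemma sum_signChar_addMonoidHom {H : Type*} [AddCommGroup H] [Fintype H]
    (ℓ : H →+ ZMod 2) [Decidable (ℓ = 0)] :
    ∑ h, signChar (ℓ h) = if ℓ = 0 then (Fintype.card H : ℝ) else 0 := by
  have hzero : signChar.compAddMonoidHom ℓ = 0 ↔ ℓ = 0 :=
    (AddChar.compAddMonoidHom_injective_right signChar signChar_injective).eq_iff (b := 0)
  simpa [hzero] using (signChar.compAddMonoidHom ℓ).sum_eq_ite

lemma sum_add_apply {ι M : Type*} [AddCommMonoid M] (A : Finset ι) (x y : ι → M) :
    ∑ i ∈ A, (x + y) i = ∑ i ∈ A, x i + ∑ i ∈ A, y i := sum_add_distrib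

lemma sum_symmDiff_of_charTwo {ι R : Type*} [DecidableEq ι] [CommRing R] [CharP R 2]
    (A B : Finset ι) (g : ι → R) :
    ∑ i ∈ A ∆ B, g i = ∑ i ∈ A, g i + ∑ i ∈ B, g i := by
  have hunion := sum_union_inter (s₁ := A) (s₂ := B) (f := g)
  have hsdiff := sum_sdiff (f := g) (inter_subset_union : A ∩ B ⊆ A ∪ B)
  rw [symmDiff_eq_sup_sdiff_inf]
  linear_combination hsdiff + hunion - CharTwo.add_self_eq_zero (∑ i ∈ A ∩ B, g i)

section Fourier

variable {n : ℕ}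

lemma fCoeff_eq (f : (Fin n → ZMod 2) → ℝ) (A : Finset (Fin n)) :
    fCoeff f A = (1 / 2 ^ n) * ∑ x, f x * signChar (∑ i ∈ A, x i) := rfl

lemma sum_signChar_sum_mem (z : Fin n → ZMod 2) :
    ∑ A : Finset (Fin n), signChar (∑ i ∈ A, z i) = if z = 0 then 2 ^ n else 0 := by
  simp_rw [signChar_sum, ← powerset_univ, ← prod_one_add]
  split_ifs with hz
  · simp [hz, one_add_one_eq_two]
  · obtain ⟨i, hi⟩ := Function.ne_iff.1 hz
    refine prod_eq_zero (mem_univ i) ?_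
    have hi1 : z i = 1 := Fin.eq_one_of_ne_zero (z i) hi
    rw [hi1, signChar_one, add_neg_cancel]

lemma sq_sum_mul_signChar (f : (Fin n → ZMod 2) → ℝ) (A : Finset (Fin n)) :
    (∑ x, f x * signChar (∑ i ∈ A, x i)) ^ 2
      = ∑ z, (∑ x, f x * f (x + z)) * signChar (∑ i ∈ A, z i) := by
  have hshift (x z : Fin n → ZMod 2) :
      signChar (∑ i ∈ A, x i) * signChar (∑ i ∈ A, (x + z) i) = signChar (∑ i ∈ A, z i) := by
    rw [sum_add_apply, AddChar.map_add_eq_mul, ← mul_assoc, signChar_mul_self, one_mul]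
  simp_rw [sq, sum_mul_sum, sum_mul]
  conv_rhs => rw [sum_comm]
  refine sum_congr rfl fun x _ => ?_
  refine (Fintype.sum_equiv (Equiv.addLeft x) _ _ fun z => ?_).symm
  rw [Equiv.coe_addLeft, ← hshift x z]
  ring

lemma sum_fCoeff_sq (f : (Fin n → ZMod 2) → ℝ) :
    ∑ A, fCoeff f A ^ 2 = (∑ x, f x ^ 2) / 2 ^ n := by
  simp_rw [fCoeff_eq, mul_pow, sq_sum_mul_signChar, ← mul_sum]
  rw [sum_comm]
  simp_rw [← mul_sum, sum_signChar_sum_mem]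
  simp only [one_div, sq, mul_ite, mul_zero, sum_ite_eq', mem_univ, ↓reduceIte, add_zero]
  field_simp

lemma sum_fCoeff_sq_signChar (p : (Fin n → ZMod 2) → ZMod 2) :
    ∑ A, fCoeff (fun x => signChar (p x)) A ^ 2 = 1 := by
  rw [sum_fCoeff_sq]
  simp [sq]

end Fourier

lemma sqrt_add_mul_sqrt_le {a b t : ℝ} (ha : 0 ≤ a) (ht : 0 ≤ t) (ht2 : (1 + t) ^ 2 ≤ 2)
    (hab : a = 0 ∨ b = 0 ∨ a = b) :
    √a + t * √b ≤ √(a + b) := by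
  rcases hab with rfl | rfl | rfl
  · have ht1 : t ≤ 1 := by nlinarith
    simpa using mul_le_of_le_one_left (Real.sqrt_nonneg b) ht1
  · simp
  · have h2 : 1 + t ≤ √2 := Real.le_sqrt_of_sq_le ht2
    calc √a + t * √a = (1 + t) * √a := by ring
      _ ≤ √2 * √a := by gcongr
      _ = √(a + a) := by rw [← Real.sqrt_mul zero_le_two, two_mul]

section AffineFamily

variable {ι : Type*} [DecidableEq ι]

lemma sum_pow_card_eq_filter_add_image_erase (C : Finset (Finset ι)) (i : ι) (t : ℝ) :
    ∑ A ∈ C, t ^ #A = ∑ A ∈ C.filter (i ∉ ·), t ^ #A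
      + t * ∑ A ∈ (C.filter (i ∈ ·)).image (·.erase i), t ^ #A := by
  rw [← sum_filter_not_add_sum_filter C (i ∈ ·),
    sum_image (s := C.filter (i ∈ ·)) fun A hA B hB =>
      erase_injOn' i (mem_filter.1 hA).2 (mem_filter.1 hB).2, mul_sum]
  congr 1
  refine sum_congr rfl fun A hA => ?_
  rw [card_erase_of_mem (mem_filter.1 hA).2, ← pow_succ',
    Nat.sub_add_cancel (card_pos.2 ⟨i, (mem_filter.1 hA).2⟩)]

/-- A coset of a subgroup of `(Finset ι, ∆)`, i.e. an affine subspace of `𝔽₂^ι`, or `∅`. -/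
def IsAffineFamily (C : Finset (Finset ι)) : Prop :=
  ∀ A ∈ C, ∀ B ∈ C, ∀ D ∈ C, A ∆ B ∆ D ∈ C

namespace IsAffineFamily

variable {C : Finset (Finset ι)}

lemma filter_notMem (hC : IsAffineFamily C) (i : ι) : IsAffineFamily (C.filter (i ∉ ·)) := by
  intro A hA B hB D hD
  simp only [mem_filter] at hA hB hD ⊢
  exact ⟨hC A hA.1 B hB.1 D hD.1, by simp [mem_symmDiff, hA.2, hB.2, hD.2]⟩

lemma image_erase (hC : IsAffineFamily C) (i : ι) :
    IsAffineFamily ((C.filter (i ∈ ·)).image (·.erase i)) := by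
  simp only [IsAffineFamily, forall_mem_image, mem_filter, and_imp]
  intro A hA hiA B hB hiB D hD hiD
  refine mem_image.2 ⟨A ∆ B ∆ D, mem_filter.2 ⟨hC A hA B hB D hD, ?_⟩, ?_⟩
  · simp [mem_symmDiff, hiA, hiB, hiD]
  · ext j
    by_cases hj : j = i <;> simp [hj, mem_symmDiff]

lemma card_filter_notMem_eq (hC : IsAffineFamily C) {i : ι} {P Q : Finset ι}
    (hP : P ∈ C) (hiP : i ∉ P) (hQ : Q ∈ C) (hiQ : i ∈ Q) :
    #(C.filter (i ∉ ·)) = #(C.filter (i ∈ ·)) := by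
  refine card_bij' (fun A _ => A ∆ P ∆ Q) (fun A _ => A ∆ P ∆ Q) ?_ ?_ ?_ ?_
  · intro A hA
    simp only [mem_filter] at hA ⊢
    exact ⟨hC A hA.1 P hP Q hQ, by simp [mem_symmDiff, hA.2, hiP, hiQ]⟩
  · intro A hA
    simp only [mem_filter] at hA ⊢
    exact ⟨hC A hA.1 P hP Q hQ, by simp [mem_symmDiff, hA.2, hiP, hiQ]⟩
  all_goals intro A _; simp [symmDiff_right_comm _ P Q, symmDiff_assoc]

lemma sum_pow_card_le_sqrt_card_of_subset {t : ℝ} (ht : 0 ≤ t) (ht2 : (1 + t) ^ 2 ≤ 2)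
    (u : Finset ι) :
    ∀ C : Finset (Finset ι), IsAffineFamily C → (∀ A ∈ C, A ⊆ u) →
      ∑ A ∈ C, t ^ #A ≤ √(#C : ℝ) := by
  induction u using Finset.induction_on with
  | empty =>
    intro C _ hCu
    have hC : C ⊆ {∅} := fun A hA => mem_singleton.2 (subset_empty.1 (hCu A hA))
    rcases subset_singleton_iff.1 hC with rfl | rfl <;> simp
  | @insert i u hi ih =>
    intro C hC hCu
    set C₀ := C.filter (i ∉ ·)
    set C₁ := (C.filter (i ∈ ·)).image (·.erase i)
    have hC₁ : #C₁ = #(C.filter (i ∈ ·)) := card_image_of_injOn fun A hA B hB =>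
      erase_injOn' i (mem_filter.1 hA).2 (mem_filter.1 hB).2
    have hcard : #C = #C₀ + #C₁ := by rw [hC₁, add_comm, card_filter_add_card_filter_not]
    have hcases : #C₀ = 0 ∨ #C₁ = 0 ∨ #C₀ = #C₁ := by
      rcases C₀.eq_empty_or_nonempty with h₀ | ⟨P, hP⟩
      · exact Or.inl (card_eq_zero.2 h₀)
      rcases (C.filter (i ∈ ·)).eq_empty_or_nonempty with h₁ | ⟨Q, hQ⟩
      · exact Or.inr (Or.inl (by rw [hC₁, h₁, card_empty]))
      rw [mem_filter] at hP hQ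
      exact Or.inr (Or.inr (by rw [hC₁, hC.card_filter_notMem_eq hP.1 hP.2 hQ.1 hQ.2]))
    have h₀ := ih C₀ (hC.filter_notMem i) fun A hA =>
      (subset_insert_iff_of_notMem (mem_filter.1 hA).2).1 (hCu A (mem_filter.1 hA).1)
    have h₁ := ih C₁ (hC.image_erase i) <| forall_mem_image.2 fun A hA =>
      subset_insert_iff.1 (hCu A (mem_filter.1 hA).1)
    calc ∑ A ∈ C, t ^ #A = ∑ A ∈ C₀, t ^ #A + t * ∑ A ∈ C₁, t ^ #A :=
          sum_pow_card_eq_filter_add_image_erase C i t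
      _ ≤ √(#C₀ : ℝ) + t * √(#C₁ : ℝ) := by gcongr
      _ ≤ √((#C₀ : ℝ) + #C₁) :=
          sqrt_add_mul_sqrt_le (Nat.cast_nonneg _) ht ht2 (by exact_mod_cast hcases)
      _ = √(#C : ℝ) := by rw [hcard, Nat.cast_add]

lemma sum_pow_card_le_sqrt_card (hC : IsAffineFamily C) {t : ℝ} (ht : 0 ≤ t)
    (ht2 : (1 + t) ^ 2 ≤ 2) :
    ∑ A ∈ C, t ^ #A ≤ √(#C : ℝ) :=
  sum_pow_card_le_sqrt_card_of_subset ht ht2 (C.sup id) C hC fun _ hA => le_sup (f := id) hA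

end IsAffineFamily

end AffineFamily

lemma sum_powersetCard_abs_le_of_flat {ι : Type*} [Fintype ι] [DecidableEq ι]
    {g : Finset ι → ℝ} {S : Finset (Finset ι)} {m : ℝ} (hS : IsAffineFamily S) (hm : 0 ≤ m)
    (hg : ∀ A, |g A| = if A ∈ S then m else 0) (hnorm : ∑ A, g A ^ 2 = 1) (k : ℕ) :
    ∑ A ∈ powersetCard k univ, |g A| ≤ (1 + √2) ^ k := by
  set t := √2 - 1
  have hsqrt2 : √2 ^ 2 = 2 := Real.sq_sqrt zero_le_two
  have ht : 0 < t := by rw [sub_pos, Real.lt_sqrt zero_le_one]; norm_num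
  have htinv : t * (1 + √2) = 1 := by linear_combination hsqrt2
  have hmS : m * √(#S : ℝ) = 1 := by
    have hcard : (#S : ℝ) * m ^ 2 = 1 := by
      simpa [← sq_abs (g _), hg, apply_ite (· ^ 2), sum_ite_mem] using hnorm
    rw [← Real.sqrt_sq hm, ← Real.sqrt_mul (sq_nonneg m), mul_comm, hcard, Real.sqrt_one]
  have hweight : t ^ k * ∑ A ∈ powersetCard k univ, |g A| ≤ 1 :=
    calc t ^ k * ∑ A ∈ powersetCard k univ, |g A|
        = ∑ A ∈ powersetCard k univ, t ^ #A * |g A| := by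
          rw [mul_sum]
          exact sum_congr rfl fun A hA => by rw [(mem_powersetCard.1 hA).2]
      _ ≤ ∑ A, t ^ #A * |g A| :=
          sum_le_sum_of_subset_of_nonneg (subset_univ _) fun _ _ _ => by positivity
      _ = m * ∑ A ∈ S, t ^ #A := by
          simp_rw [hg, mul_ite, mul_zero, sum_ite_mem, univ_inter, mul_sum, mul_comm]
      _ ≤ m * √(#S : ℝ) := by
          gcongr
          exact hS.sum_pow_card_le_sqrt_card ht.le (by simp [t, hsqrt2])
      _ = 1 := hmS
  calc ∑ A ∈ powersetCard k univ, |g A|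
      = (t * (1 + √2)) ^ k * ∑ A ∈ powersetCard k univ, |g A| := by
        rw [htinv, one_pow, one_mul]
    _ ≤ 1 * (1 + √2) ^ k := by rw [mul_pow, mul_right_comm]; gcongr
    _ = (1 + √2) ^ k := one_mul _

section QuadraticPhase

variable {n : ℕ} {p : (Fin n → ZMod 2) → ZMod 2}
  {B : (Fin n → ZMod 2) →+ (Fin n → ZMod 2) →+ ZMod 2}

lemma sum_signChar_mul_signChar_add (hB : ∀ x y, p (x + y) = p x + p y + p 0 + B x y)
    (z : Fin n → ZMod 2) [Decidable (B.flip z = 0)] :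
    ∑ x, signChar (p x) * signChar (p (x + z))
      = if B.flip z = 0 then 2 ^ n * signChar (p z + p 0) else 0 := by
  have hterm (x : Fin n → ZMod 2) : signChar (p x) * signChar (p (x + z))
      = signChar (p z + p 0) * signChar (B.flip z x) := by
    rw [hB, AddMonoidHom.flip_apply, add_assoc, add_assoc, AddChar.map_add_eq_mul,
      ← mul_assoc, signChar_mul_self, one_mul, ← add_assoc, AddChar.map_add_eq_mul]
  simp_rw [hterm, ← mul_sum, sum_signChar_addMonoidHom]
  split_ifs <;> simp [mul_comm]

def radicalHom (hB : ∀ x y, p (x + y) = p x + p y + p 0 + B x y) (A : Finset (Fin n)) :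
    B.flip.ker →+ ZMod 2 :=
  AddMonoidHom.mk' (fun z => p z + p 0 + ∑ i ∈ A, (z : Fin n → ZMod 2) i) fun z w => by
    have hzw : B z w = 0 := DFunLike.congr_fun (AddMonoidHom.mem_ker.1 w.2) (z : Fin n → ZMod 2)
    rw [AddSubgroup.coe_add, hB, hzw, sum_add_apply]
    ring

lemma radicalHom_symmDiff (hB : ∀ x y, p (x + y) = p x + p y + p 0 + B x y)
    (A A' A'' : Finset (Fin n)) :
    radicalHom hB (A ∆ A' ∆ A'') = radicalHom hB A + radicalHom hB A' + radicalHom hB A'' := by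
  refine AddMonoidHom.ext fun z => ?_
  simp only [radicalHom, AddMonoidHom.mk'_apply, AddMonoidHom.add_apply, sum_symmDiff_of_charTwo]
  linear_combination -CharTwo.add_self_eq_zero (p z + p 0)

lemma fCoeff_sq_of_polar (hB : ∀ x y, p (x + y) = p x + p y + p 0 + B x y)
    (A : Finset (Fin n)) [Decidable (radicalHom hB A = 0)] :
    fCoeff (fun x => signChar (p x)) A ^ 2
      = if radicalHom hB A = 0 then (Nat.card B.flip.ker : ℝ) / 2 ^ n else 0 := by
  classical
  have hsum : ∑ z, (∑ x, signChar (p x) * signChar (p (x + z))) * signChar (∑ i ∈ A, z i)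
      = 2 ^ n * ∑ z : B.flip.ker, signChar (radicalHom hB A z) := by
    simp_rw [sum_signChar_mul_signChar_add hB, ite_mul, zero_mul, ← sum_filter]
    rw [mul_sum, sum_subtype (p := (· ∈ B.flip.ker)) _ fun z => by simp [AddMonoidHom.mem_ker]]
    exact sum_congr rfl fun z _ => by rw [mul_assoc, ← AddChar.map_add_eq_mul]; rfl
  rw [fCoeff_eq, mul_pow, sq_sum_mul_signChar, hsum,
    sum_signChar_addMonoidHom, Nat.card_eq_fintype_card]
  split_ifs
  · field_simp
  · simp

lemma exists_isAffineFamily_abs_fCoeff_eq (hB : ∀ x y, p (x + y) = p x + p y + p 0 + B x y) :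
    ∃ (S : Finset (Finset (Fin n))) (m : ℝ), IsAffineFamily S ∧ 0 ≤ m ∧
      ∀ A, |fCoeff (fun x => signChar (p x)) A| = if A ∈ S then m else 0 := by
  classical
  refine ⟨univ.filter (radicalHom hB · = 0), √((Nat.card B.flip.ker : ℝ) / 2 ^ n), ?_,
    Real.sqrt_nonneg _, fun A => ?_⟩
  · intro A hA A' hA' A'' hA''
    simp only [mem_filter, mem_univ, true_and] at hA hA' hA'' ⊢
    rw [radicalHom_symmDiff, hA, hA', hA'', add_zero, add_zero]
  · rw [← Real.sqrt_sq_eq_abs, fCoeff_sq_of_polar hB]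
    simp only [mem_filter, mem_univ, true_and]
    split_ifs <;> simp

end QuadraticPhase

lemma IsDegreeLE2.exists_polar {n : ℕ} {p : (Fin n → ZMod 2) → ZMod 2} (hp : IsDegreeLE2 p) :
    ∃ B : (Fin n → ZMod 2) →+ (Fin n → ZMod 2) →+ ZMod 2,
      ∀ x y, p (x + y) = p x + p y + p 0 + B x y := by
  obtain ⟨a, b, c, hpc⟩ := hp
  set β : (Fin n → ZMod 2) →ₗ[ZMod 2] (Fin n → ZMod 2) →ₗ[ZMod 2] ZMod 2 :=
    Matrix.toLinearMap₂' (ZMod 2) (Matrix.of fun i j => if i < j then a i j else 0)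
  have hquad (x : Fin n → ZMod 2) :
      (∑ i, ∑ j, if i < j then a i j * x i * x j else 0) = β x x := by
    simp only [β, Matrix.toLinearMap₂'_apply, Matrix.of_apply, smul_eq_mul]
    refine sum_congr rfl fun i _ => sum_congr rfl fun j _ => ?_
    split_ifs <;> ring
  refine ⟨LinearMap.toAddMonoidHom'.comp (β + β.flip).toAddMonoidHom, fun x y => ?_⟩
  simp only [hpc, hquad]
  simp only [map_add, map_zero, LinearMap.add_apply, Pi.add_apply, Pi.zero_apply, mul_add,
    mul_zero, sum_add_distrib, sum_const_zero, AddMonoidHom.comp_apply, AddMonoidHom.add_apply,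
    LinearMap.toAddMonoidHom'_apply, LinearMap.toAddMonoidHom_coe, LinearMap.flip_apply]
  linear_combination -CharTwo.add_self_eq_zero c

theorem fourier_weight_deg_two_le_general (n : ℕ)
    (p : (Fin n → ZMod 2) → ZMod 2) (hp : IsDegreeLE2 p) (k : ℕ) :
    ∑ A ∈ Finset.powersetCard k (Finset.univ : Finset (Fin n)),
        |fCoeff (fun x => (-1 : ℝ) ^ (p x).val) A|
      ≤ (1 + Real.sqrt 2) ^ k := by
  obtain ⟨B, hB⟩ := hp.exists_polar
  obtain ⟨S, m, hS, hm, hflat⟩ := exists_isAffineFamily_abs_fCoeff_eq hB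
  exact sum_powersetCard_abs_le_of_flat hS hm hflat (sum_fCoeff_sq_signChar p) k

/-- For any degree `≤ 2` polynomial `p : 𝔽₂ⁿ → 𝔽₂`, the `k`-th Fourier weight of
`(-1)^{p(x)}` is at most `(1 + √2)^k`. -/
theorem fourier_weight_deg_two_le (n : ℕ) (hn : 1 ≤ n)
    (p : (Fin n → ZMod 2) → ZMod 2) (hp : IsDegreeLE2 p) (k : ℕ) :
    ∑ A ∈ Finset.powersetCard k (Finset.univ : Finset (Fin n)),
        |fCoeff (fun x => (-1 : ℝ) ^ (p x).val) A|
      ≤ (1 + Real.sqrt 2) ^ k :=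
  fourier_weight_deg_two_le_general n p hp k
end

section
/- For all real α ∈ [0, 1], the inequality α^α · (2 − α)^{2 − α} ≥ 2 · (√2 − 1)^α holds (with the convention 0^0 = 1). -/
/-!
Both factors are bounded below by the tangent line of `t ↦ t log t`: for `a > 0`,
`x log x ≥ x log a + x - a`, i.e. `x ^ x ≥ a ^ x * exp (x - a)`. Choosing the points
`a = 2 - √2` for `α` and `b = √2` for `2 - α`, whose sum is `α + (2 - α)`, the exponential
factors cancel and `a ^ α * b ^ (2 - α) = 2 * (√2 - 1) ^ α` since `a = √2 (√2 - 1)`.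
-/

open Real

theorem rpow_mul_exp_sub_le_rpow_self {x a : ℝ} (hx : 0 ≤ x) (ha : 0 < a) :
    a ^ x * exp (x - a) ≤ x ^ x := by
  rcases hx.eq_or_lt with rfl | hx
  · simpa using ha.le
  rw [rpow_def_of_pos ha, rpow_def_of_pos hx, ← exp_add, exp_le_exp]
  have h : x * (log a - log x) ≤ a - x :=
    calc x * (log a - log x) ≤ x * (a / x - 1) := by
          refine mul_le_mul_of_nonneg_left ?_ hx.le
          rw [← log_div ha.ne' hx.ne']
          exact log_le_sub_one_of_pos (div_pos ha hx)
      _ = a - x := by field_simp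
  linarith

theorem rpow_mul_rpow_le_rpow_self_mul_rpow_self {x y a b : ℝ} (hx : 0 ≤ x) (hy : 0 ≤ y)
    (ha : 0 < a) (hb : 0 < b) (hsum : x + y = a + b) :
    a ^ x * b ^ y ≤ x ^ x * y ^ y :=
  calc a ^ x * b ^ y = (a ^ x * exp (x - a)) * (b ^ y * exp (y - b)) := by
        rw [mul_mul_mul_comm, ← exp_add, show x - a + (y - b) = 0 by linarith, exp_zero, mul_one]
    _ ≤ x ^ x * y ^ y :=
        mul_le_mul (rpow_mul_exp_sub_le_rpow_self hx ha) (rpow_mul_exp_sub_le_rpow_self hy hb)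
          (by positivity) (rpow_nonneg hx x)

/-- For all `α ∈ [0, 1]`, `α^α · (2 - α)^{2-α} ≥ 2 · (√2 - 1)^α`
(real powers, with the convention `0^0 = 1`). -/
theorem rpow_inequality (α : ℝ) (hα : α ∈ Set.Icc (0 : ℝ) 1) :
    α ^ α * (2 - α) ^ (2 - α) ≥ 2 * (Real.sqrt 2 - 1) ^ α := by
  obtain ⟨h0, h1⟩ := hα
  have hsq : √2 * √2 = 2 := mul_self_sqrt zero_le_two
  have hsplit : 2 - √2 = √2 * (√2 - 1) := by linear_combination -hsq
  have hpoints : (2 - √2) ^ α * √2 ^ (2 - α) = 2 * (√2 - 1) ^ α := by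
    rw [hsplit, mul_rpow (sqrt_nonneg 2) (by linarith [one_lt_sqrt_two]), mul_right_comm,
      ← rpow_add (by positivity), add_sub_cancel, rpow_two, sq, hsq]
  rw [ge_iff_le, ← hpoints]
  exact rpow_mul_rpow_le_rpow_self_mul_rpow_self h0 (by linarith)
    (by linarith [sqrt_two_lt_three_halves]) (by positivity) (by ring)
end

section
/- There exists a constant C > 0 such that for all integers m ≥ 1 and all integers k with 1 ≤ k ≤ m, binom(2m + 1, k) ≤ C · 2^m · k^{−1/2} · (1 + √2)^k. -/
/-!
Write `n = 2m + 1 = k + l`. Stirling's bounds `√(2πn) (n/e)^n ≤ n! ≤ e √n (n/e)^n` give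
`C(k + l, k) ≤ e/(2π) · √((k + l)/(k l)) · (k + l)^(k + l) / (k^k l^l)`.
Weighted AM-GM with weights `k/n`, `l/n` bounds the last factor by `(1 + t)^n / t^k` for every
`t > 0`; for `t = √2 - 1` this is `√2^n (1 + √2)^k = 2^m √2 (1 + √2)^k`. Since `k ≤ m < l`,
`√((k + l)/(k l)) ≤ √(2/k)`, and altogether `C = e/π` works.
-/

open Real Nat

theorem add_pow_add_mul_pow_mul_pow_le {x y : ℝ} (hx : 0 ≤ x) (hy : 0 ≤ y) {k l : ℕ}
    (hk : k ≠ 0) (hl : l ≠ 0) :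
    ((k : ℝ) + l) ^ (k + l) * x ^ k * y ^ l ≤ (x + y) ^ (k + l) * (k ^ k * l ^ l) := by
  have hK : (0 : ℝ) < k := by positivity
  have hL : (0 : ℝ) < l := by positivity
  generalize hn_def : (k : ℝ) + l = n
  have hn : 0 < n := hn_def ▸ by positivity
  have amgm := geom_mean_le_arith_mean2_weighted (w₁ := k / n) (w₂ := l / n) (by positivity)
    (by positivity) (by positivity : 0 ≤ x * n / k) (by positivity : 0 ≤ y * n / l)
    (by rw [← add_div, hn_def, div_self hn.ne'])
  have hmean : (k : ℝ) / n * (x * n / k) + l / n * (y * n / l) = x + y := by field_simp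
  rw [hmean] at amgm
  have h := pow_le_pow_left₀ (by positivity) amgm (k + l)
  rw [mul_pow, ← rpow_natCast, ← rpow_natCast _ (k + l), ← rpow_mul (by positivity),
    ← rpow_mul (by positivity), Nat.cast_add, hn_def, div_mul_cancel₀ _ hn.ne',
    div_mul_cancel₀ _ hn.ne', rpow_natCast, rpow_natCast, div_pow, div_pow,
    _root_.div_mul_div_comm, div_le_iff₀ (by positivity)] at h
  calc _ = (x * n) ^ k * (y * n) ^ l := by ring
    _ ≤ _ := h

theorem add_pow_div_pow_mul_pow_le_sqrt_two {k l : ℕ} (hk : k ≠ 0) (hl : l ≠ 0) :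
    ((k : ℝ) + l) ^ (k + l) / (k ^ k * l ^ l) ≤ √2 ^ (k + l) * (1 + √2) ^ k := by
  have hsqrt2 : 1 < √2 := by rw [lt_sqrt zero_le_one]; norm_num
  have hconj : (√2 - 1) * (1 + √2) = 1 := by linear_combination sq_sqrt zero_le_two
  have h := add_pow_add_mul_pow_mul_pow_le (sub_nonneg.mpr hsqrt2.le) zero_le_one hk hl
  rw [sub_add_cancel, one_pow, mul_one] at h
  rw [div_le_iff₀ (by positivity)]
  calc ((k : ℝ) + l) ^ (k + l) = ((k : ℝ) + l) ^ (k + l) * ((√2 - 1) * (1 + √2)) ^ k := by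
        rw [hconj, one_pow, mul_one]
    _ = ((k : ℝ) + l) ^ (k + l) * (√2 - 1) ^ k * (1 + √2) ^ k := by rw [mul_pow]; ring
    _ ≤ √2 ^ (k + l) * (k ^ k * l ^ l) * (1 + √2) ^ k := by gcongr
    _ = _ := by ring

theorem factorial_le_exp_one_mul_sqrt_mul_pow {n : ℕ} (hn : n ≠ 0) :
    (n ! : ℝ) ≤ exp 1 * √n * (n / exp 1) ^ n := by
  obtain ⟨j, rfl⟩ := exists_add_one_eq.mpr (Nat.pos_of_ne_zero hn)
  have h : Stirling.stirlingSeq (j + 1) ≤ exp 1 / √2 :=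
    Stirling.stirlingSeq_one ▸ Stirling.stirlingSeq'_antitone (Nat.zero_le j)
  rw [Stirling.stirlingSeq, div_le_iff₀ (by positivity), sqrt_mul zero_le_two] at h
  calc _ ≤ _ := h
    _ = _ := by field_simp

theorem add_choose_le_stirling {k l : ℕ} (hk : k ≠ 0) (hl : l ≠ 0) :
    ((k + l).choose k : ℝ) ≤
      exp 1 / (2 * π) * √((k + l) / (k * l)) * ((k + l) ^ (k + l) / (k ^ k * l ^ l)) := by
  have hK : (0 : ℝ) < k := by positivity
  have hL : (0 : ℝ) < l := by positivity
  have hnum := factorial_le_exp_one_mul_sqrt_mul_pow (n := k + l) (by omega)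
  have hdenom := mul_le_mul (Stirling.le_factorial_stirling k)
    (Stirling.le_factorial_stirling l) (by positivity) (by positivity)
  calc ((k + l).choose k : ℝ)
      ≤ exp 1 * √(k + l : ℕ) * ((k + l : ℕ) / exp 1) ^ (k + l) /
          (√(2 * π * k) * (k / exp 1) ^ k * (√(2 * π * l) * (l / exp 1) ^ l)) := by
        rw [Nat.cast_add_choose]
        exact div_le_div₀ (by positivity) hnum (by positivity) hdenom
    _ = _ := by
        push_cast
        rw [div_pow, div_pow, div_pow, sqrt_div (by positivity), sqrt_mul' _ hL.le,
          sqrt_mul' _ hK.le, sqrt_mul' _ hL.le]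
        field_simp
        rw [sq_sqrt (by positivity)]
        ring

/-- There is a constant `C > 0` such that `binom(2m+1, k) ≤ C · 2^m · k^{-1/2} · (1+√2)^k`
for all `m ≥ 1` and `1 ≤ k ≤ m`. -/
theorem binom_bound :
    ∃ C : ℝ, 0 < C ∧ ∀ m k : ℕ, 1 ≤ m → 1 ≤ k → k ≤ m →
      (Nat.choose (2 * m + 1) k : ℝ) ≤
        C * 2 ^ m * (k : ℝ) ^ (-(1 : ℝ) / 2) * (1 + Real.sqrt 2) ^ k := by
  refine ⟨exp 1 / π, by positivity, fun m k _ hk hkm ↦ ?_⟩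
  obtain ⟨l, hl⟩ := Nat.exists_eq_add_of_le (show k ≤ 2 * m + 1 by omega)
  have hk0 : k ≠ 0 := by omega
  have hl0 : l ≠ 0 := by omega
  have hK : (0 : ℝ) < k := by positivity
  have hsqrt : √((k + l) / (k * l)) ≤ √2 / √k := by
    rw [← sqrt_div zero_le_two]
    apply Real.sqrt_le_sqrt
    rw [div_le_div_iff₀ (by positivity) hK]
    have : (k : ℝ) + l ≤ 2 * l := by exact_mod_cast (by omega : k + l ≤ 2 * l)
    nlinarith
  have hentropy := add_pow_div_pow_mul_pow_le_sqrt_two hk0 hl0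
  have hrpow : (k : ℝ) ^ (-(1 : ℝ) / 2) = (√k)⁻¹ := by
    rw [sqrt_eq_rpow, ← rpow_neg hK.le]; norm_num
  rw [hl]
  calc ((k + l).choose k : ℝ)
      ≤ exp 1 / (2 * π) * √((k + l) / (k * l)) * ((k + l) ^ (k + l) / (k ^ k * l ^ l)) :=
        add_choose_le_stirling hk0 hl0
    _ ≤ exp 1 / (2 * π) * (√2 / √k) * (√2 ^ (k + l) * (1 + √2) ^ k) := by gcongr
    _ = _ := by
        rw [← hl, hrpow, pow_succ, pow_mul, sq_sqrt zero_le_two]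
        field_simp
        exact sq_sqrt zero_le_two
end

section
/- The constant 1 + √2 in the binomial bound is optimal: for every real c with 0 < c < 1 + √2 and every constant C > 0, there exist integers m ≥ 1 and k with 1 ≤ k ≤ m such that binom(2m + 1, k) > C · 2^m · k^{−1/2} · c^k. -/
/-!
We may assume `c ≥ 1` and `C ≥ 1`. With `x = c⁻¹`, the terms `binom(2m+1, k) x^k` sum to
`(1 + x)^(2m+1)`, and since `x ≤ 1` the terms with `k ≤ m` carry at least half of the sum,
so one of them is at least `(1 + x)^(2m+1) / (2(m+1))`. Now `c < 1 + √2` means exactly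
`(1 + x)^2 > 2`, so this lower bound is `2^m` times a geometrically growing factor over a
linear one, and eventually exceeds `C · 2^m`; then `k ≠ 0`, and `k^(-1/2) ≤ 1`.
-/

open Filter Finset

lemma one_add_pow_le_two_mul_sum_range_half {x : ℝ} (hx0 : 0 ≤ x) (hx1 : x ≤ 1) (m : ℕ) :
    (1 + x) ^ (2 * m + 1) ≤ 2 * ∑ k ∈ range (m + 1), ((2 * m + 1).choose k : ℝ) * x ^ k := by
  set f : ℕ → ℝ := fun k ↦ ((2 * m + 1).choose k : ℝ) * x ^ k
  have upper_half_le : ∑ i ∈ range (m + 1), f (m + 1 + i) ≤ ∑ i ∈ range (m + 1), f i := by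
    rw [← sum_range_reflect f]
    refine sum_le_sum fun i hi ↦ ?_
    have hi : i ≤ m := Nat.lt_succ_iff.mp (mem_range.mp hi)
    simp only [f, add_tsub_cancel_right]
    rw [Nat.choose_symm_of_eq_add (show 2 * m + 1 = (m + 1 + i) + (m - i) by omega)]
    exact mul_le_mul_of_nonneg_left (pow_le_pow_of_le_one hx0 hx1 (by omega)) (by positivity)
  calc (1 + x) ^ (2 * m + 1) = ∑ k ∈ range (2 * m + 1 + 1), f k := by
        simp [f, add_comm (1 : ℝ) x, add_pow, mul_comm]
    _ = ∑ k ∈ range (m + 1), f k + ∑ i ∈ range (m + 1), f (m + 1 + i) := by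
        rw [show 2 * m + 1 + 1 = (m + 1) + (m + 1) by omega, sum_range_add]
    _ ≤ 2 * ∑ k ∈ range (m + 1), f k := by linarith

lemma exists_one_add_pow_le_choose_mul_pow {x : ℝ} (hx0 : 0 ≤ x) (hx1 : x ≤ 1) (m : ℕ) :
    ∃ k ≤ m, (1 + x) ^ (2 * m + 1) ≤ 2 * (m + 1) * (((2 * m + 1).choose k : ℝ) * x ^ k) := by
  obtain ⟨k, hk, hmax⟩ := (range (m + 1)).exists_max_image
    (fun k ↦ ((2 * m + 1).choose k : ℝ) * x ^ k) ⟨0, by simp⟩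
  refine ⟨k, Nat.lt_succ_iff.mp (mem_range.mp hk), ?_⟩
  have hsum := sum_le_card_nsmul _ _ _ hmax
  rw [card_range, nsmul_eq_mul, Nat.cast_succ] at hsum
  linarith [one_add_pow_le_two_mul_sum_range_half hx0 hx1 m]

lemma exists_mul_two_pow_lt_pow {r : ℝ} (hr : 0 < r) (hr2 : 2 < r ^ 2) (D : ℝ) :
    ∃ m : ℕ, 1 ≤ m ∧ D * 2 ^ m * (2 * (m + 1)) < r ^ (2 * m + 1) := by
  set s := 2 / r ^ 2
  have hs0 : 0 ≤ s := by positivity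
  have hs1 : s < 1 := (div_lt_one (by positivity)).mpr hr2
  have hlim : Tendsto (fun m : ℕ ↦ 2 * D * ((m + 1) * s ^ m)) atTop (nhds 0) := by
    simpa [add_mul] using ((tendsto_self_mul_const_pow_of_lt_one hs0 hs1).add
      (tendsto_pow_atTop_nhds_zero_of_lt_one hs0 hs1)).const_mul (2 * D)
  obtain ⟨m, hm, hm1⟩ := ((hlim.eventually (gt_mem_nhds hr)).and (eventually_ge_atTop 1)).exists
  refine ⟨m, hm1, ?_⟩
  have hpow : s ^ m * (r ^ 2) ^ m = 2 ^ m := by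
    rw [← mul_pow, div_mul_cancel₀ _ (by positivity)]
  calc D * 2 ^ m * (2 * (m + 1)) = 2 * D * ((m + 1) * s ^ m) * (r ^ 2) ^ m := by
        rw [← hpow]; ring
    _ < r * (r ^ 2) ^ m := by gcongr
    _ = r ^ (2 * m + 1) := by ring

lemma two_lt_one_add_inv_sq {c : ℝ} (hc0 : 0 < c) (hc : c < 1 + √2) : 2 < (1 + c⁻¹) ^ 2 := by
  have hsqrt : √2 ^ 2 = 2 := Real.sq_sqrt zero_le_two
  have hsqrt1 : 1 < √2 := by rw [Real.lt_sqrt zero_le_one]; norm_num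
  have hcinv : c * c⁻¹ = 1 := mul_inv_cancel₀ hc0.ne'
  have : √2 < 1 + c⁻¹ := by nlinarith [inv_pos.mpr hc0]
  nlinarith

lemma exists_mul_two_pow_mul_pow_lt_choose {c : ℝ} (hc1 : 1 ≤ c) (hc : c < 1 + √2) (D : ℝ) :
    ∃ m k : ℕ, 1 ≤ m ∧ k ≤ m ∧ D * 2 ^ m * c ^ k < (2 * m + 1).choose k := by
  have hc0 : 0 < c := zero_lt_one.trans_le hc1
  obtain ⟨m, hm1, hDm⟩ :=
    exists_mul_two_pow_lt_pow (by positivity) (two_lt_one_add_inv_sq hc0 hc) D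
  obtain ⟨k, hkm, hk⟩ := exists_one_add_pow_le_choose_mul_pow (inv_nonneg.mpr hc0.le)
    (inv_le_one_of_one_le₀ hc1) m
  refine ⟨m, k, hm1, hkm, ?_⟩
  have hlt : D * 2 ^ m < (2 * m + 1).choose k * c⁻¹ ^ k :=
    lt_of_mul_lt_mul_right (a := 2 * (m + 1 : ℝ)) (by linarith) (by positivity)
  calc D * 2 ^ m * c ^ k < (2 * m + 1).choose k * c⁻¹ ^ k * c ^ k := by gcongr
    _ = (2 * m + 1).choose k := by
        rw [mul_assoc, ← mul_pow, inv_mul_cancel₀ hc0.ne', one_pow, mul_one]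

theorem binom_bound_sharp_general (c : ℝ) (hc0 : 0 < c) (hc : c < 1 + Real.sqrt 2)
    (C : ℝ) :
    ∃ m k : ℕ, 1 ≤ m ∧ 1 ≤ k ∧ k ≤ m ∧
      (Nat.choose (2 * m + 1) k : ℝ) >
        C * 2 ^ m * (k : ℝ) ^ (-(1 : ℝ) / 2) * c ^ k := by
  have hc' : max c 1 < 1 + √2 := max_lt hc (by simp)
  obtain ⟨m, k, hm1, hkm, hlt⟩ :=
    exists_mul_two_pow_mul_pow_lt_choose (le_max_right c 1) hc' (max C 1)
  have hD : 1 ≤ max C 1 * 2 ^ m :=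
    one_le_mul_of_one_le_of_one_le (le_max_right C 1) (one_le_pow₀ one_le_two)
  have hk1 : 1 ≤ k := by
    by_contra! hk
    simp only [Nat.lt_one_iff.mp hk, pow_zero, mul_one, Nat.choose_zero_right, Nat.cast_one] at hlt
    linarith
  have hroot : (k : ℝ) ^ (-(1 : ℝ) / 2) ≤ 1 :=
    Real.rpow_le_one_of_one_le_of_nonpos (by exact_mod_cast hk1) (by norm_num)
  refine ⟨m, k, hm1, hk1, hkm, lt_of_le_of_lt ?_ hlt⟩
  calc C * 2 ^ m * (k : ℝ) ^ (-(1 : ℝ) / 2) * c ^ k ≤ max C 1 * 2 ^ m * 1 * max c 1 ^ k := by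
        gcongr <;> exact le_max_left _ _
    _ = max C 1 * 2 ^ m * max c 1 ^ k := by rw [mul_one]

/-- The constant `1 + √2` in the binomial bound is optimal: for any `0 < c < 1 + √2` and any
`C > 0`, there are `m ≥ 1` and `1 ≤ k ≤ m` with `binom(2m+1, k) > C · 2^m · k^{-1/2} · c^k`. -/
theorem binom_bound_sharp (c : ℝ) (hc0 : 0 < c) (hc : c < 1 + Real.sqrt 2)
    (C : ℝ) (hC : 0 < C) :
    ∃ m k : ℕ, 1 ≤ m ∧ 1 ≤ k ∧ k ≤ m ∧
      (Nat.choose (2 * m + 1) k : ℝ) >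
        C * 2 ^ m * (k : ℝ) ^ (-(1 : ℝ) / 2) * c ^ k :=
  binom_bound_sharp_general c hc0 hc C
end
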